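/- Let G be a directed graph with strictly positive edge weights, and let x,y be distinct vertices such that the two smallest-weight simple paths π₁, π₂ from x to y share the same first edge (x,a). Then the path π₂ with its first edge removed is a second simple shortest path from a to y, i.e., a minimum-weight simple a-y path different from the right subpath of π₁. -/
import Mathlib


/-- Weight of a path given as a list of vertices: sum of edge weights of consecutive pairs. -/
def pathWt {α : Type*} {M : Type*} [AddCommMonoid M] (w : α → α → M) (p : List α) : M :=
  ((p.zip p.tail).map fun e => w e.1 e.2).sum

/-- `p` is a simple path from `u` to `v` in the directed graph with adjacency `Adj`. -/
def IsSimplePath {α : Type*} (Adj : α → α → Prop) (u v : α) (p : List α) : Prop :=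
  p.Chain' Adj ∧ p.head? = some u ∧ p.getLast? = some v ∧ p.Nodup

/-- `p` is a simple cycle through `x` (written `x :: ... :: x`). -/
def IsSimpleCycleThrough {α : Type*} (Adj : α → α → Prop) (x : α) (p : List α) : Prop :=
  p.Chain' Adj ∧ p.head? = some x ∧ p.getLast? = some x ∧ 2 ≤ p.length ∧ p.dropLast.Nodup

/-- `f` enumerates the `k` smallest-weight elements of the set `S` of paths,
in nondecreasing order of weight. -/
def KSmallestIn {α M : Type*} [AddCommMonoid M] [Preorder M]
    (w : α → α → M) (S : Set (List α)) {k : ℕ} (f : Fin k → List α) : Prop :=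
  (∀ i, f i ∈ S) ∧ Function.Injective f ∧
  (Monotone fun i => pathWt w (f i)) ∧
  (∀ p ∈ S, p ∉ Set.range f → ∀ i, pathWt w (f i) ≤ pathWt w p)


lemma pathWt_cons_cons {α M : Type*} [AddCommMonoid M] (w : α → α → M) (u v : α) (l : List α) :
    pathWt w (u :: v :: l) = w u v + pathWt w (v :: l) := by simp [pathWt]

lemma pathWt_nonneg {α : Type*} (w : α → α → ℝ) (hw : ∀ u v, 0 < w u v) (l : List α) :
    0 ≤ pathWt w l := by
  apply List.sum_nonneg
  intro t ht
  obtain ⟨e, _, rfl⟩ := List.mem_map.mp ht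
  exact (hw _ _).le

lemma pathWt_split {α M : Type*} [AddCommMonoid M] (w : α → α → M) (l₁ : List α) (x : α)
    (l₂ : List α) : pathWt w (l₁ ++ x :: l₂) = pathWt w (l₁ ++ [x]) + pathWt w (x :: l₂) := by
  induction l₁ with
  | nil => simp [pathWt]
  | cons u l ih =>
    cases l with
    | nil => simp [pathWt_cons_cons, pathWt]
    | cons v l' =>
      simp only [List.cons_append, pathWt_cons_cons]
      rw [show (v :: l') ++ x :: l₂ = v :: (l' ++ x :: l₂) by simp] at *
      rw [ih]
      simp [add_assoc, List.cons_append]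

/-- If the two smallest-weight simple `x`–`y` paths share the same first edge `(x,a)`, then
the second one minus its first edge is a second simple shortest path from `a` to `y`. -/
theorem stmt15 {V : Type*} (Adj : V → V → Prop) (w : V → V → ℝ) (hw : ∀ u v, 0 < w u v)
    (x y a : V) (hxy : x ≠ y) (π₁ π₂ : List V)
    (h1 : IsSimplePath Adj x y π₁)
    (h1min : ∀ q, IsSimplePath Adj x y q → pathWt w π₁ ≤ pathWt w q)
    (h2 : IsSimplePath Adj x y π₂) (hne : π₂ ≠ π₁)
    (h2min : ∀ q, IsSimplePath Adj x y q → q ≠ π₁ → pathWt w π₂ ≤ pathWt w q)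
    (ha1 : π₁.tail.head? = some a) (ha2 : π₂.tail.head? = some a) :
    IsSimplePath Adj a y π₂.tail ∧ π₂.tail ≠ π₁.tail ∧
    ∀ q, IsSimplePath Adj a y q → q ≠ π₁.tail → pathWt w π₂.tail ≤ pathWt w q := by
  obtain ⟨c1, hh1, hl1, hn1⟩ := h1
  obtain ⟨c2, hh2, hl2, hn2⟩ := h2
  -- destructure π₁ = x :: a :: s₁
  obtain ⟨x1, t1, rfl⟩ : ∃ u t, π₁ = u :: t := by
    cases π₁ with
    | nil => simp at hh1
    | cons u t => exact ⟨u, t, rfl⟩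
  obtain rfl : x = x1 := by simpa using hh1.symm
  obtain ⟨a1, s₁, rfl⟩ : ∃ u t, t1 = u :: t := by
    cases t1 with
    | nil => simp at ha1
    | cons u t => exact ⟨u, t, rfl⟩
  obtain rfl : a = a1 := by simpa using ha1.symm
  -- destructure π₂ = x :: a :: s₂
  obtain ⟨x2, t2, rfl⟩ : ∃ u t, π₂ = u :: t := by
    cases π₂ with
    | nil => simp at hh2
    | cons u t => exact ⟨u, t, rfl⟩
  obtain rfl : x = x2 := by simpa using hh2.symm
  obtain ⟨a2, s₂, rfl⟩ : ∃ u t, t2 = u :: t := by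
    cases t2 with
    | nil => simp at ha2
    | cons u t => exact ⟨u, t, rfl⟩
  obtain rfl : a = a2 := by simpa using ha2.symm
  simp only [List.tail_cons]
  have hxa : x ≠ a := by
    intro h; subst h
    simp at hn2
  have hAdjxa : Adj x a := (List.isChain_cons_cons.mp c2).1
  refine ⟨⟨(List.isChain_cons_cons.mp c2).2, rfl, by simpa using hl2, (List.nodup_cons.mp hn2).2⟩, ?_, ?_⟩
  · intro h
    apply hne
    rw [h]
  · intro q hq hqne
    obtain ⟨cq, hhq, hlq, hnq⟩ := hq
    obtain ⟨aq, sq, rfl⟩ : ∃ u t, q = u :: t := by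
      cases q with
      | nil => simp at hhq
      | cons u t => exact ⟨u, t, rfl⟩
    obtain rfl : a = aq := by simpa using hhq.symm
    by_cases hxq : x ∈ a :: sq
    · -- x occurs in q: split q = q₁ ++ x :: q₂
      obtain ⟨q₁, q₂, hsplit⟩ := List.append_of_mem hxq
      have hq₁ne : q₁ ≠ [] := by
        intro h
        subst h
        simp at hsplit
        exact hxa hsplit.1.symm
      -- x :: q₂ is a simple x-y path
      have hchain : (x :: q₂).Chain' Adj := by
        rw [hsplit] at cq
        exact (List.isChain_append.mp cq).2.1
      have hlast : (x :: q₂).getLast? = some y := by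
        rw [hsplit, List.getLast?_append] at hlq
        rcases h : (x :: q₂).getLast? with _ | z
        · exact absurd h (by simp [List.getLast?_cons])
        · rw [h] at hlq
          simpa using hlq
      have hsub : List.Sublist (x :: q₂) (a :: sq) := by
        rw [hsplit]
        exact (List.suffix_append q₁ (x :: q₂)).sublist
      have hnodup : (x :: q₂).Nodup := hnq.sublist hsub
      have hneq : x :: q₂ ≠ x :: a :: s₁ := by
        intro h
        obtain ⟨b, q₁', rfl⟩ : ∃ u t, q₁ = u :: t := by
          cases q₁ with
          | nil => exact absurd rfl hq₁ne
          | cons u t => exact ⟨u, t, rfl⟩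
        have hb : b = a := by
          have := hsplit
          simp at this
          exact this.1.symm
        subst hb
        injection h with _ h'
        rw [hsplit, h'] at hnq
        simp at hnq
      have hle := h2min _ ⟨hchain, rfl, hlast, hnodup⟩ hneq
      have hsplitWt : pathWt w (a :: sq) = pathWt w (q₁ ++ [x]) + pathWt w (x :: q₂) := by
        rw [hsplit]; exact pathWt_split w q₁ x q₂
      have h0 : (0:ℝ) ≤ pathWt w (q₁ ++ [x]) := pathWt_nonneg w hw _
      have hxa0 : 0 < w x a := hw x a
      rw [pathWt_cons_cons] at hle
      linarith [hle, hsplitWt]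
    · -- x not in q: x :: q is a simple x-y path
      have hchain : (x :: a :: sq).Chain' Adj := List.isChain_cons_cons.mpr ⟨hAdjxa, cq⟩
      have hlast : (x :: a :: sq).getLast? = some y := by simpa using hlq
      have hnodup : (x :: a :: sq).Nodup := List.nodup_cons.mpr ⟨hxq, hnq⟩
      have hneq : x :: a :: sq ≠ x :: a :: s₁ := by
        intro h
        injection h with _ h'
        exact hqne h'
      have hle := h2min _ ⟨hchain, rfl, hlast, hnodup⟩ hneq
      rw [pathWt_cons_cons, pathWt_cons_cons] at hle
      linarith
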